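/- Let 𝒜 ⊆ C(X, ℂ) be the closure, in the supremum norm, of the algebra of restrictions to X of rational functions with poles off X (functions p/q with p, q polynomials and q nonvanishing on X). Let Λ ⊆ R be a finite set and let γ : 𝒜 → B(K) be a unital algebra homomorphism into the bounded operators on a complex Hilbert space K such that γ(f) = 0 whenever f ∈ 𝒜 vanishes at every point of Λ. Then there exist idempotent operators (E_λ)_{λ∈Λ} in B(K) such that E_λ E_μ = 0 for λ ≠ μ, Σ_{λ∈Λ} E_λ = I, and γ(f) E_λ = f(λ) E_λ for every f ∈ 𝒜 and every λ ∈ Λ; consequently K is the algebraic direct sum of the closed subspaces E_λ K, on each of which γ(f) acts as multiplication by f(λ). -/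

import Mathlib

noncomputable section

open scoped ComplexConjugate Matrix

/-- The open unit disk with two closed disks (centered at `c₁`, `c₂` on the real axis,
with radii `r₁`, `r₂`) removed. -/
def Rdom (c₁ c₂ r₁ r₂ : ℝ) : Set ℂ :=
  {z : ℂ | ‖z‖ < 1 ∧ r₁ < ‖z - (c₁ : ℂ)‖ ∧ r₂ < ‖z - (c₂ : ℂ)‖}

/-- The boundary `B = B₀ ∪ B₁ ∪ B₂` of `Rdom`. -/
def Bbnd (c₁ c₂ r₁ r₂ : ℝ) : Set ℂ :=
  {z : ℂ | ‖z‖ = 1} ∪ {z : ℂ | ‖z - (c₁ : ℂ)‖ = r₁} ∪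
    {z : ℂ | ‖z - (c₂ : ℂ)‖ = r₂}

/-- The closure `X = R ∪ B`. -/
def Xcl (c₁ c₂ r₁ r₂ : ℝ) : Set ℂ := Rdom c₁ c₂ r₁ r₂ ∪ Bbnd c₁ c₂ r₁ r₂

/-- The standing assumptions on the parameters. -/
def GoodParams (c₁ c₂ r₁ r₂ : ℝ) : Prop :=
  -1 < c₁ ∧ c₁ < 0 ∧ 0 < c₂ ∧ c₂ < 1 ∧
    0 < r₁ ∧ r₁ < min |c₁| (1 - |c₁|) ∧ 0 < r₂ ∧ r₂ < min |c₂| (1 - |c₂|)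

/-- The set of restrictions to `X` of rational functions with poles off `X`, inside `C(X, ℂ)`. -/
def RatFns (c₁ c₂ r₁ r₂ : ℝ) : Set C(Xcl c₁ c₂ r₁ r₂, ℂ) :=
  {f | ∃ p q : Polynomial ℂ, (∀ z ∈ Xcl c₁ c₂ r₁ r₂, q.eval z ≠ 0) ∧
    ∀ z : Xcl c₁ c₂ r₁ r₂, f z = p.eval (z : ℂ) / q.eval (z : ℂ)}

/-- The algebra `𝒜`: the sup-norm closure of `RatFns` in `C(X, ℂ)`. -/
def Acl (c₁ c₂ r₁ r₂ : ℝ) : Set C(Xcl c₁ c₂ r₁ r₂, ℂ) := closure (RatFns c₁ c₂ r₁ r₂)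

/-!
Since `γ` is linear and kills every function vanishing on `Λ`, `γ f` depends only on `f|Λ`.
The Lagrange basis polynomials `e_λ` of `Λ` lie in `𝒜` and restrict on `Λ` to the indicators of
the points of `Λ`, which satisfy `e_λ² = e_λ`, `e_λ e_μ = 0`, `Σ e_λ = 1` and `f e_λ = f(λ) e_λ`
there; applying `γ` turns these into the required identities for `E_λ = γ(e_λ)`.
-/

open Polynomial

def Subalgebra.algHomOfMapOn {R A B : Type*} [CommSemiring R] [Semiring A] [Algebra R A]
    [Semiring B] [Algebra R B] (S : Subalgebra R A) (γ : A → B) (hone : γ 1 = 1)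
    (hadd : ∀ f ∈ S, ∀ g ∈ S, γ (f + g) = γ f + γ g)
    (hmul : ∀ f ∈ S, ∀ g ∈ S, γ (f * g) = γ f * γ g)
    (hsmul : ∀ c : R, ∀ f ∈ S, γ (c • f) = c • γ f) : S →ₐ[R] B where
  toFun f := γ f
  map_one' := hone
  map_mul' f g := hmul f f.2 g g.2
  map_zero' := by simpa using hsmul 0 0 S.zero_mem
  map_add' f g := hadd f f.2 g g.2
  commutes' c := by simpa [Algebra.algebraMap_eq_smul_one, hone] using hsmul c 1 S.one_mem

section Interpolation

variable {X : Set ℂ} {S : Subalgebra ℂ C(X, ℂ)} {B : Type*} [Ring B] [Algebra ℂ B]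
  (φ : S →ₐ[ℂ] B) {Λ : Finset ℂ} {e : ℂ → S}
  (hφ : ∀ f : S, (∀ l ∈ Λ, ∀ hl : l ∈ X, (f : C(X, ℂ)) ⟨l, hl⟩ = 0) → φ f = 0)
  (he : ∀ l ∈ Λ, ∀ μ ∈ Λ, ∀ hμ : μ ∈ X, (e l : C(X, ℂ)) ⟨μ, hμ⟩ = if μ = l then 1 else 0)

include hφ in
theorem AlgHom.map_eq_of_eqOn_finset {f g : S}
    (hfg : ∀ l ∈ Λ, ∀ hl : l ∈ X, (f : C(X, ℂ)) ⟨l, hl⟩ = (g : C(X, ℂ)) ⟨l, hl⟩) : φ f = φ g := by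
  rw [← sub_eq_zero, ← map_sub]
  exact hφ _ fun l hl hlX => by simp [hfg l hl hlX]

include hφ he

theorem AlgHom.map_interpolant_mul_self {l : ℂ} (hl : l ∈ Λ) : φ (e l) * φ (e l) = φ (e l) := by
  rw [← map_mul]
  refine φ.map_eq_of_eqOn_finset hφ fun μ hμ hμX => ?_
  simp only [Subalgebra.coe_mul, ContinuousMap.mul_apply, he l hl μ hμ hμX]
  split_ifs <;> simp

theorem AlgHom.map_interpolant_mul_of_ne {l l₂ : ℂ} (hl : l ∈ Λ) (hl₂ : l₂ ∈ Λ) (hne : l ≠ l₂) :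
    φ (e l) * φ (e l₂) = 0 := by
  rw [← map_mul, ← map_zero φ]
  refine φ.map_eq_of_eqOn_finset hφ fun μ hμ hμX => ?_
  simp only [Subalgebra.coe_mul, ContinuousMap.mul_apply, he l hl μ hμ hμX,
    he l₂ hl₂ μ hμ hμX]
  split_ifs <;> simp_all

theorem AlgHom.sum_map_interpolant : ∑ l ∈ Λ, φ (e l) = 1 := by
  rw [← map_sum, ← map_one φ]
  refine φ.map_eq_of_eqOn_finset hφ fun μ hμ hμX => ?_
  simp only [AddSubmonoidClass.coe_finsetSum, ContinuousMap.coe_sum, Finset.sum_apply,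
    OneMemClass.coe_one, ContinuousMap.one_apply]
  rw [Finset.sum_congr rfl fun l hl => he l hl μ hμ hμX, Finset.sum_ite_eq, if_pos hμ]

theorem AlgHom.map_mul_map_interpolant (f : S) {l : ℂ} (hl : l ∈ Λ) (hlX : l ∈ X) :
    φ f * φ (e l) = (f : C(X, ℂ)) ⟨l, hlX⟩ • φ (e l) := by
  rw [← map_mul, ← map_smul]
  refine φ.map_eq_of_eqOn_finset hφ fun μ hμ hμX => ?_
  simp only [Subalgebra.coe_mul, Subalgebra.coe_smul, ContinuousMap.mul_apply,
    ContinuousMap.smul_apply, smul_eq_mul, he l hl μ hμ hμX]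
  split_ifs with hμl
  · subst hμl; rfl
  · simp

end Interpolation

theorem Lagrange.eval_basis_id {F : Type*} [Field F] [DecidableEq F] {Λ : Finset F} {l μ : F}
    (hl : l ∈ Λ) (hμ : μ ∈ Λ) :
    (Lagrange.basis Λ id l).eval μ = if μ = l then 1 else 0 := by
  split_ifs with hμl
  · subst hμl
    exact Lagrange.eval_basis_self (Set.injOn_id _) hl
  · exact Lagrange.eval_basis_of_ne (v := id) (Ne.symm hμl) hμ

theorem Xcl_eq (c₁ c₂ r₁ r₂ : ℝ) :
    Xcl c₁ c₂ r₁ r₂ = {z : ℂ | ‖z‖ ≤ 1 ∧ r₁ ≤ ‖z - (c₁ : ℂ)‖ ∧ r₂ ≤ ‖z - (c₂ : ℂ)‖} ∪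
      Bbnd c₁ c₂ r₁ r₂ := by
  ext z
  simp only [Xcl, Rdom, Bbnd, Set.mem_union, Set.mem_ofPred_eq]
  grind

theorem isClosed_Xcl (c₁ c₂ r₁ r₂ : ℝ) : IsClosed (Xcl c₁ c₂ r₁ r₂) := by
  rw [Xcl_eq]
  refine .union ?_ (.union (.union ?_ ?_) ?_)
  · simp only [Set.ofPred_and]
    exact (isClosed_le (by fun_prop) (by fun_prop)).inter
      ((isClosed_le (by fun_prop) (by fun_prop)).inter (isClosed_le (by fun_prop) (by fun_prop)))
  all_goals exact isClosed_eq (by fun_prop) (by fun_prop)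

-- Makes `C(X, ℂ)` a topological algebra, so that `𝒜` is the closure of a subalgebra.
instance (c₁ c₂ r₁ r₂ : ℝ) : LocallyCompactSpace (Xcl c₁ c₂ r₁ r₂) :=
  (isClosed_Xcl c₁ c₂ r₁ r₂).locallyCompactSpace

def ratFunctions (c₁ c₂ r₁ r₂ : ℝ) : Subalgebra ℂ C(Xcl c₁ c₂ r₁ r₂, ℂ) where
  carrier := RatFns c₁ c₂ r₁ r₂
  mul_mem' := by
    rintro f g ⟨p, q, hq, hf⟩ ⟨p', q', hq', hg⟩
    refine ⟨p * p', q * q', fun z hz => by simpa using mul_ne_zero (hq z hz) (hq' z hz),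
      fun z => ?_⟩
    simp only [ContinuousMap.mul_apply, hf z, hg z, eval_mul, div_mul_div_comm]
  add_mem' := by
    rintro f g ⟨p, q, hq, hf⟩ ⟨p', q', hq', hg⟩
    refine ⟨p * q' + p' * q, q * q', fun z hz => by simpa using mul_ne_zero (hq z hz) (hq' z hz),
      fun z => ?_⟩
    simp only [ContinuousMap.add_apply, hf z, hg z, eval_add, eval_mul,
      div_add_div _ _ (hq z z.2) (hq' z z.2)]
    ring
  algebraMap_mem' c := ⟨C c, 1, fun _ _ => by simp, fun _ => by simp⟩

theorem toContinuousMapOn_mem_ratFunctions (c₁ c₂ r₁ r₂ : ℝ) (p : ℂ[X]) :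
    p.toContinuousMapOn (Xcl c₁ c₂ r₁ r₂) ∈ ratFunctions c₁ c₂ r₁ r₂ :=
  ⟨p, 1, fun _ _ => by simp, fun _ => by simp⟩

theorem mem_topologicalClosure_ratFunctions {c₁ c₂ r₁ r₂ : ℝ} {f : C(Xcl c₁ c₂ r₁ r₂, ℂ)} :
    f ∈ (ratFunctions c₁ c₂ r₁ r₂).topologicalClosure ↔ f ∈ Acl c₁ c₂ r₁ r₂ :=
  Iff.rfl

theorem spectral_idempotents_general (c₁ c₂ r₁ r₂ : ℝ)
    (Λ : Finset ℂ)
    {K : Type*} [NormedAddCommGroup K] [InnerProductSpace ℂ K]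
    (γ : C(Xcl c₁ c₂ r₁ r₂, ℂ) → (K →L[ℂ] K))
    -- `γ` is a unital algebra homomorphism on `𝒜`
    (hone : γ 1 = 1)
    (hadd : ∀ f ∈ Acl c₁ c₂ r₁ r₂, ∀ g ∈ Acl c₁ c₂ r₁ r₂, γ (f + g) = γ f + γ g)
    (hmul : ∀ f ∈ Acl c₁ c₂ r₁ r₂, ∀ g ∈ Acl c₁ c₂ r₁ r₂, γ (f * g) = γ f * γ g)
    (hsmul : ∀ (c : ℂ), ∀ f ∈ Acl c₁ c₂ r₁ r₂, γ (c • f) = c • γ f)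
    -- `γ` annihilates functions vanishing on `Λ`
    (hvanish : ∀ f ∈ Acl c₁ c₂ r₁ r₂,
      (∀ l ∈ Λ, ∀ hl : l ∈ Xcl c₁ c₂ r₁ r₂, f ⟨l, hl⟩ = 0) → γ f = 0) :
    ∃ E : ℂ → (K →L[ℂ] K),
      (∀ l ∈ Λ, E l * E l = E l) ∧
      (∀ l ∈ Λ, ∀ l2 ∈ Λ, l ≠ l2 → E l * E l2 = 0) ∧
      (∑ l ∈ Λ, E l = 1) ∧
      (∀ x : K, ∑ l ∈ Λ, E l x = x) ∧
      (∀ f ∈ Acl c₁ c₂ r₁ r₂, ∀ l ∈ Λ, ∀ hl : l ∈ Xcl c₁ c₂ r₁ r₂,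
        γ f ∘L E l = f ⟨l, hl⟩ • E l) := by
  let A := (ratFunctions c₁ c₂ r₁ r₂).topologicalClosure
  let φ := A.algHomOfMapOn γ hone hadd hmul hsmul
  have hφ (f : A) :
      (∀ l ∈ Λ, ∀ hl : l ∈ Xcl c₁ c₂ r₁ r₂, (f : C(Xcl c₁ c₂ r₁ r₂, ℂ)) ⟨l, hl⟩ = 0) → φ f = 0 :=
    hvanish f (mem_topologicalClosure_ratFunctions.1 f.2)
  let e (l : ℂ) : A := ⟨(Lagrange.basis Λ id l).toContinuousMapOn _,
    (ratFunctions c₁ c₂ r₁ r₂).le_topologicalClosure (toContinuousMapOn_mem_ratFunctions ..)⟩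
  have he : ∀ l ∈ Λ, ∀ μ ∈ Λ, ∀ hμ : μ ∈ Xcl c₁ c₂ r₁ r₂,
      (e l : C(Xcl c₁ c₂ r₁ r₂, ℂ)) ⟨μ, hμ⟩ = if μ = l then 1 else 0 :=
    fun l hl μ hμ _ => Lagrange.eval_basis_id hl hμ
  have hsum := φ.sum_map_interpolant hφ he
  refine ⟨fun l => φ (e l), fun l hl => φ.map_interpolant_mul_self hφ he hl,
    fun l hl l₂ hl₂ => φ.map_interpolant_mul_of_ne hφ he hl hl₂, hsum,
    fun x => by rw [← sum_apply, hsum, one_apply_eq_self],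
    fun f hf l hl hlX => ?_⟩
  exact φ.map_mul_map_interpolant hφ he ⟨f, mem_topologicalClosure_ratFunctions.2 hf⟩ hl hlX

/-- If `γ` is a unital homomorphism of `𝒜` into `B(K)` annihilating every
function vanishing on the finite set `Λ ⊆ R`, then there are idempotents `E_λ` with
`E_λ E_μ = 0` for `λ ≠ μ`, `Σ E_λ = I`, and `γ(f) E_λ = f(λ) E_λ`; consequently `K` decomposes
as the algebraic direct sum of the ranges of the `E_λ`, on which `γ(f)` acts as `f(λ)`. -/
theorem spectral_idempotents (c₁ c₂ r₁ r₂ : ℝ) (h : GoodParams c₁ c₂ r₁ r₂)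
    (Λ : Finset ℂ) (hΛ : (Λ : Set ℂ) ⊆ Rdom c₁ c₂ r₁ r₂)
    {K : Type*} [NormedAddCommGroup K] [InnerProductSpace ℂ K] [CompleteSpace K]
    (γ : C(Xcl c₁ c₂ r₁ r₂, ℂ) → (K →L[ℂ] K))
    -- `γ` is a unital algebra homomorphism on `𝒜`
    (hone : γ 1 = 1)
    (hadd : ∀ f ∈ Acl c₁ c₂ r₁ r₂, ∀ g ∈ Acl c₁ c₂ r₁ r₂, γ (f + g) = γ f + γ g)
    (hmul : ∀ f ∈ Acl c₁ c₂ r₁ r₂, ∀ g ∈ Acl c₁ c₂ r₁ r₂, γ (f * g) = γ f * γ g)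
    (hsmul : ∀ (c : ℂ), ∀ f ∈ Acl c₁ c₂ r₁ r₂, γ (c • f) = c • γ f)
    -- `γ` annihilates functions vanishing on `Λ`
    (hvanish : ∀ f ∈ Acl c₁ c₂ r₁ r₂,
      (∀ l ∈ Λ, ∀ hl : l ∈ Xcl c₁ c₂ r₁ r₂, f ⟨l, hl⟩ = 0) → γ f = 0) :
    ∃ E : ℂ → (K →L[ℂ] K),
      (∀ l ∈ Λ, E l * E l = E l) ∧
      (∀ l ∈ Λ, ∀ l2 ∈ Λ, l ≠ l2 → E l * E l2 = 0) ∧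
      (∑ l ∈ Λ, E l = 1) ∧
      (∀ x : K, ∑ l ∈ Λ, E l x = x) ∧
      (∀ f ∈ Acl c₁ c₂ r₁ r₂, ∀ l ∈ Λ, ∀ hl : l ∈ Xcl c₁ c₂ r₁ r₂,
        γ f ∘L E l = f ⟨l, hl⟩ • E l) :=
  spectral_idempotents_general c₁ c₂ r₁ r₂ Λ γ hone hadd hmul hsmul hvanish
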